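/- arXiv:2106.14593 — 8 statements merged into one kernel-verified Lean document; each statement's English description precedes it below -/
import Mathlib

section
/- Let 𝒢, ℋ ∈ ℂ[X] be nonzero coprime polynomials, r = 𝒢/ℋ, and b ∈ ℂ. If x, y ∈ ℂ are distinct double roots of f = 𝒢 + b·ℋ (i.e. f and f' vanish at both x and y), then ℋ(x)ℋ(y) ≠ 0, r'(x) = r'(y) = 0, and r(x) = r(y). -/
theorem two_double_roots_give_equal_critical_values
    (𝒢 ℋ : Polynomial ℂ) (h𝒢 : 𝒢 ≠ 0) (hℋ : ℋ ≠ 0) (hcop : IsCoprime 𝒢 ℋ)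
    (b x y : ℂ) (hxy : x ≠ y)
    (hfx : (𝒢 + Polynomial.C b * ℋ).eval x = 0)
    (hfx' : ((𝒢 + Polynomial.C b * ℋ).derivative).eval x = 0)
    (hfy : (𝒢 + Polynomial.C b * ℋ).eval y = 0)
    (hfy' : ((𝒢 + Polynomial.C b * ℋ).derivative).eval y = 0) :
    ℋ.eval x * ℋ.eval y ≠ 0 ∧
    deriv (fun z => 𝒢.eval z / ℋ.eval z) x = 0 ∧
    deriv (fun z => 𝒢.eval z / ℋ.eval z) y = 0 ∧
    𝒢.eval x / ℋ.eval x = 𝒢.eval y / ℋ.eval y := by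
  obtain ⟨a, c, hac⟩ := hcop
  have key : ∀ z : ℂ, (𝒢 + Polynomial.C b * ℋ).eval z = 0 →
      ((𝒢 + Polynomial.C b * ℋ).derivative).eval z = 0 →
      ℋ.eval z ≠ 0 ∧ deriv (fun w => 𝒢.eval w / ℋ.eval w) z = 0 ∧
        𝒢.eval z / ℋ.eval z = -b := by
    intro z hf hf'
    simp only [Polynomial.eval_add, Polynomial.eval_mul, Polynomial.eval_C] at hf
    have hG : 𝒢.eval z = -b * ℋ.eval z := by linear_combination hf
    have hH : ℋ.eval z ≠ 0 := by
      intro h0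
      have := congrArg (Polynomial.eval z) hac
      simp [Polynomial.eval_add, Polynomial.eval_mul, h0, hG, Polynomial.eval_one] at this
    have hG' : 𝒢.derivative.eval z = -b * ℋ.derivative.eval z := by
      simp only [Polynomial.derivative_add, Polynomial.derivative_mul,
        Polynomial.derivative_C, zero_mul, zero_add, Polynomial.eval_add,
        Polynomial.eval_mul, Polynomial.eval_C] at hf'
      linear_combination hf'
    refine ⟨hH, ?_, ?_⟩
    · rw [deriv_fun_div (Polynomial.differentiableAt 𝒢) (Polynomial.differentiableAt ℋ) hH]
      simp only [Polynomial.deriv, hG, hG']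
      field_simp
      ring
    · rw [hG]
      field_simp
  obtain ⟨hHx, hdx, hvx⟩ := key x hfx hfx'
  obtain ⟨hHy, hdy, hvy⟩ := key y hfy hfy'
  exact ⟨mul_ne_zero hHx hHy, hdx, hdy, hvx.trans hvy.symm⟩
end

section
/- The polynomial g(e,y) = 102400 − 108544·y − 3200000·e⁴·y + 44800·y² − 8960·y³ + 880·y⁴ − 40·y⁵ + y⁶ is irreducible over ℚ. -/
open Polynomial

noncomputable section SexticAux

def sexticQ : ℚ[X] := X ^ 2 - 24 * X + 400

def sexticB : ℚ[X] :=
  X ^ 6 - 40 * X ^ 5 + 880 * X ^ 4 - 8960 * X ^ 3 + 44800 * X ^ 2 - 108544 * X + 102400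

def sexticA : ℚ[X] := -3200000 * X

def sexticP : (ℚ[X])[X] := C sexticA * X ^ 4 + C sexticB

lemma sexticB_factor : sexticB = (X - 4) ^ 4 * sexticQ := by
  unfold sexticB sexticQ; ring

lemma sexticQ_natDegree : sexticQ.natDegree = 2 := by
  unfold sexticQ; compute_degree!

lemma sexticQ_ne_zero : sexticQ ≠ 0 := by
  intro h
  have := sexticQ_natDegree
  rw [h] at this
  simp at this

lemma sexticQ_irreducible : Irreducible sexticQ := by
  rw [irreducible_iff_roots_eq_zero_of_degree_le_three (by rw [sexticQ_natDegree])
    (by rw [sexticQ_natDegree]; norm_num)]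
  rw [Multiset.eq_zero_iff_forall_notMem]
  intro x hx
  rw [mem_roots sexticQ_ne_zero] at hx
  have h : x ^ 2 - 24 * x + 400 = 0 := by simpa [sexticQ, IsRoot] using hx
  nlinarith [sq_nonneg (x - 12)]

lemma sexticA_ne_zero : sexticA ≠ 0 := by
  unfold sexticA
  intro h
  have := congrArg (Polynomial.coeff · 1) h
  simp at this

lemma sexticQ_not_dvd_linear {c : ℚ} (hc : c ≠ 0) {b : ℚ} : ¬ sexticQ ∣ (C c * X + C b) := by
  intro h
  have hne : C c * X + C b ≠ 0 := by
    intro h0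
    have := congrArg (Polynomial.coeff · 1) h0
    simp [hc] at this
  have hdeg := Polynomial.degree_le_of_dvd h hne
  rw [show (C c * X + C b : ℚ[X]).degree = 1 by
    simpa using Polynomial.degree_linear hc] at hdeg
  have h2 : sexticQ.degree = 2 := by
    rw [Polynomial.degree_eq_natDegree sexticQ_ne_zero, sexticQ_natDegree]
    rfl
  rw [h2] at hdeg
  exact absurd hdeg (by decide)

lemma sexticA_eq : sexticA = C (-3200000) * X + C 0 := by
  simp only [sexticA, map_neg, map_ofNat, map_zero, add_zero]

lemma sexticP_irreducible : Irreducible sexticP := by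
  have hqprime : Prime sexticQ :=
    (UniqueFactorizationMonoid.irreducible_iff_prime).mp sexticQ_irreducible
  have hdegP : sexticP.degree = 4 := by
    unfold sexticP
    rw [Polynomial.degree_add_eq_left_of_degree_lt]
    · exact Polynomial.degree_C_mul_X_pow 4 sexticA_ne_zero
    · rw [Polynomial.degree_C_mul_X_pow 4 sexticA_ne_zero]
      exact lt_of_le_of_lt (Polynomial.degree_C_le) (by norm_num)
  have hc0 : sexticP.coeff 0 = sexticB := by
    unfold sexticP; simp [Polynomial.coeff_C]
  have hc4 : sexticP.coeff 4 = sexticA := by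
    unfold sexticP; simp [Polynomial.coeff_C]
  apply irreducible_of_eisenstein_criterion
    ((Ideal.span_singleton_prime sexticQ_ne_zero).mpr hqprime)
  · -- leading coeff not in span
    have hl : sexticP.leadingCoeff = sexticA := by
      rw [Polynomial.leadingCoeff, Polynomial.natDegree_eq_of_degree_eq_some hdegP, hc4]
    rw [hl, Ideal.mem_span_singleton, sexticA_eq]
    exact sexticQ_not_dvd_linear (by norm_num)
  · intro n hn
    rw [hdegP] at hn
    have hn4 : n < 4 := by exact_mod_cast hn
    rcases eq_or_ne n 0 with rfl | h0
    · rw [hc0, Ideal.mem_span_singleton]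
      exact ⟨(X - 4) ^ 4, by rw [sexticB_factor]; ring⟩
    · have hc : sexticP.coeff n = 0 := by
        unfold sexticP
        simp only [Polynomial.coeff_add, Polynomial.coeff_C_mul, Polynomial.coeff_X_pow,
          Polynomial.coeff_C, if_neg (by omega : ¬ n = 4), if_neg h0, mul_zero, add_zero]
      rw [hc]
      exact Ideal.zero_mem _
  · rw [hdegP]; decide
  · rw [hc0, Ideal.span_singleton_pow, Ideal.mem_span_singleton]
    intro hdvd
    rw [sexticB_factor] at hdvd
    obtain ⟨t, ht⟩ := hdvd
    have h1 : sexticQ ∣ (X - 4 : ℚ[X]) ^ 4 := by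
      refine ⟨t, mul_right_cancel₀ sexticQ_ne_zero ?_⟩
      linear_combination ht
    have h2 : sexticQ ∣ (X - 4 : ℚ[X]) := hqprime.dvd_of_dvd_pow h1
    have h3 : sexticQ ∣ C 1 * X + C (-4) := by
      rw [map_one, one_mul, map_neg, ← sub_eq_add_neg, map_ofNat]; exact h2
    exact sexticQ_not_dvd_linear (by norm_num) h3
  · -- primitive
    intro r hr
    have hcoeff := (Polynomial.C_dvd_iff_dvd_coeff r sexticP).mp hr
    have h4 : r ∣ sexticA := hc4 ▸ hcoeff 4
    have h0 : r ∣ sexticB := hc0 ▸ hcoeff 0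
    have hX : r ∣ (X : ℚ[X]) := by
      refine h4.trans ⟨C (-1/3200000), ?_⟩
      rw [sexticA_eq, Polynomial.C_0, add_zero, mul_comm, ← mul_assoc, ← Polynomial.C_mul]
      norm_num
    obtain ⟨s, hs⟩ := hX
    rcases Polynomial.irreducible_X.isUnit_or_isUnit hs with hu | hu
    · exact hu
    · exfalso
      obtain ⟨u, rfl⟩ := hu
      have hXr : (X : ℚ[X]) ∣ r := by
        refine ⟨(↑u⁻¹ : ℚ[X]ˣ), ?_⟩
        rw [hs, mul_assoc]
        simp
      have hXB : (X : ℚ[X]) ∣ sexticB := hXr.trans h0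
      have := Polynomial.eval_dvd (x := (0 : ℚ)) hXB
      simp [sexticB] at this

end SexticAux

open MvPolynomial in
theorem sextic_resolvent_specialisation_irreducible :
    Irreducible ((102400 : MvPolynomial (Fin 2) ℚ) - 108544 * X 1
      - 3200000 * (X 0) ^ 4 * X 1 + 44800 * (X 1) ^ 2 - 8960 * (X 1) ^ 3
      + 880 * (X 1) ^ 4 - 40 * (X 1) ^ 5 + (X 1) ^ 6) := by
  let E2 : MvPolynomial (Fin 1) ℚ ≃+* ℚ[X] :=
    ((MvPolynomial.renameEquiv ℚ (Equiv.equivPUnit.{1,1} (Fin 1))).trans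
      (MvPolynomial.pUnitAlgEquiv ℚ)).toRingEquiv
  let F : MvPolynomial (Fin 2) ℚ ≃+* (ℚ[X])[X] :=
    (MvPolynomial.finSuccEquiv ℚ 1).toRingEquiv.trans (Polynomial.mapEquiv E2)
  rw [← MulEquiv.irreducible_iff F]
  have hX0 : F (X 0) = Polynomial.X := by
    simp [F, MvPolynomial.finSuccEquiv_X_zero]
  have hX1 : F (X 1) = Polynomial.C Polynomial.X := by
    have : (X 1 : MvPolynomial (Fin 2) ℚ) = X (Fin.succ 0) := rfl
    simp [F, this, MvPolynomial.finSuccEquiv_X_succ, E2]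
  have : F ((102400 : MvPolynomial (Fin 2) ℚ) - 108544 * X 1
      - 3200000 * (X 0) ^ 4 * X 1 + 44800 * (X 1) ^ 2 - 8960 * (X 1) ^ 3
      + 880 * (X 1) ^ 4 - 40 * (X 1) ^ 5 + (X 1) ^ 6) = sexticP := by
    rw [show sexticP = Polynomial.C sexticA * Polynomial.X ^ 4 + Polynomial.C sexticB from rfl]
    simp only [map_add, map_sub, map_mul, map_pow, map_ofNat, hX0, hX1, sexticA, sexticB,
      map_neg, Polynomial.C_mul, Polynomial.C_add, Polynomial.C_sub, Polynomial.C_pow,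
      Polynomial.C_neg]
    ring
  rw [this]
  exact sexticP_irreducible
end

section
/- Let f : ℂ[X] with f(X) = X⁵ + 5sX³ + 5s²X + t for integers s, t, where t is divisible by a prime p, s is divisible by p, and t is not divisible by p². Then f is irreducible over ℚ. Consequently, the number of pairs (s,t) ∈ ℤ² with |5s| ≤ H, |5s²| ≤ H, |t| ≤ H such that X⁵ + 5sX³ + 5s²X + t is irreducible over ℚ is at least c·H^{3/2} for some constant c > 0 and all large H. -/
open Polynomial

lemma main1 (s t : ℤ) (p : ℕ) (hp : p.Prime) (hpt : (p : ℤ) ∣ t) (hps : (p : ℤ) ∣ s)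
    (hpt2 : ¬ ((p : ℤ) ^ 2 ∣ t)) :
    Irreducible ((X ^ 5 + C ((5 * s : ℤ) : ℚ) * X ^ 3 + C ((5 * s ^ 2 : ℤ) : ℚ) * X
      + C ((t : ℤ) : ℚ) : Polynomial ℚ)) := by
  set g : ℤ[X] := X ^ 5 + C (5 * s) * X ^ 3 + C (5 * s ^ 2) * X + C t with hgdef
  have hmonic : g.Monic := by unfold g; monicity!
  have hdeg : g.natDegree = 5 := by unfold g; compute_degree!
  have hmap : g.map (algebraMap ℤ ℚ) =
      (X ^ 5 + C ((5 * s : ℤ) : ℚ) * X ^ 3 + C ((5 * s ^ 2 : ℤ) : ℚ) * X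
      + C ((t : ℤ) : ℚ) : Polynomial ℚ) := by
    simp [hgdef, Polynomial.map_add, Polynomial.map_mul, Polynomial.map_pow, map_ofNat]
  rw [← hmap, ← hmonic.irreducible_iff_irreducible_map_fraction_map]
  set P : Ideal ℤ := Ideal.span {(p : ℤ)} with hP
  have hpZ : Prime (p : ℤ) := Nat.prime_iff_prime_int.1 hp
  have hPp : P.IsPrime := by
    rw [hP, Ideal.span_singleton_prime (by exact_mod_cast hp.ne_zero)]
    exact hpZ
  have hdeg' : g.degree = 5 := by
    rw [Polynomial.degree_eq_natDegree hmonic.ne_zero, hdeg]; rfl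
  apply irreducible_of_eisenstein_criterion hPp
  · rw [hmonic.leadingCoeff, hP, Ideal.mem_span_singleton]
    exact hpZ.not_dvd_one
  · intro n hn
    rw [hdeg'] at hn
    have hn5 : n < 5 := by exact_mod_cast hn
    rw [hP, Ideal.mem_span_singleton, hgdef]
    interval_cases n <;>
      simp only [coeff_add, coeff_C_mul, coeff_X_pow, coeff_C, coeff_X] <;>
      norm_num <;>
      first
        | exact hpt
        | exact Dvd.dvd.mul_left hps 5
        | exact Dvd.dvd.mul_left (dvd_pow hps two_ne_zero) 5
  · rw [hdeg']; norm_num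
  · rw [hP, Ideal.span_singleton_pow, Ideal.mem_span_singleton]
    simpa [hgdef, coeff_add, coeff_C] using hpt2
  · exact hmonic.isPrimitive

open Polynomial in
theorem deMoivre_quintic_eisenstein_and_count :
    (∀ (s t : ℤ) (p : ℕ), p.Prime → (p : ℤ) ∣ t → (p : ℤ) ∣ s → ¬ ((p : ℤ) ^ 2 ∣ t) →
      Irreducible ((X ^ 5 + C ((5 * s : ℤ) : ℚ) * X ^ 3 + C ((5 * s ^ 2 : ℤ) : ℚ) * X
        + C ((t : ℤ) : ℚ) : Polynomial ℚ))) ∧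
    ∃ c : ℝ, 0 < c ∧ ∃ H₀ : ℝ, ∀ H : ℝ, H₀ ≤ H →
      c * H ^ ((3 : ℝ) / 2) ≤
        (Set.ncard {st : ℤ × ℤ | |(5 * st.1 : ℝ)| ≤ H ∧ |(5 * (st.1 : ℝ) ^ 2)| ≤ H ∧
          |(st.2 : ℝ)| ≤ H ∧
          Irreducible ((X ^ 5 + C ((5 * st.1 : ℤ) : ℚ) * X ^ 3
            + C ((5 * st.1 ^ 2 : ℤ) : ℚ) * X + C ((st.2 : ℤ) : ℚ) : Polynomial ℚ))} : ℝ) := by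
  refine ⟨main1, ?_⟩
  refine ⟨1/40, by norm_num, 100, fun H hH => ?_⟩
  set S : Set (ℤ × ℤ) := {st : ℤ × ℤ | |(5 * st.1 : ℝ)| ≤ H ∧ |(5 * (st.1 : ℝ) ^ 2)| ≤ H ∧
          |(st.2 : ℝ)| ≤ H ∧
          Irreducible ((X ^ 5 + C ((5 * st.1 : ℤ) : ℚ) * X ^ 3
            + C ((5 * st.1 ^ 2 : ℤ) : ℚ) * X + C ((st.2 : ℤ) : ℚ) : Polynomial ℚ))} with hS
  have hH0 : (0:ℝ) < H := by linarith
  set r := Real.sqrt H with hr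
  have hr10 : (10:ℝ) ≤ r := by
    rw [hr, show (10:ℝ) = Real.sqrt 100 by
      rw [show (100:ℝ) = 10^2 by norm_num, Real.sqrt_sq (by norm_num)]]
    exact Real.sqrt_le_sqrt hH
  have hrr : r * r = H := Real.mul_self_sqrt hH0.le
  set A := ⌊r/5⌋₊ with hA
  set B := ⌊(H-2)/4⌋₊ with hB
  have hAle : (A:ℝ) ≤ r/5 := Nat.floor_le (by positivity)
  have hBle : (B:ℝ) ≤ (H-2)/4 := Nat.floor_le (by linarith)
  have hAgt : r/5 < (A:ℝ)+1 := Nat.lt_floor_add_one _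
  have hBgt : (H-2)/4 < (B:ℝ)+1 := Nat.lt_floor_add_one _
  set ψ : ℕ × ℕ → ℤ × ℤ := fun ab => ((2 * ab.1 : ℤ), (4 * ab.2 + 2 : ℤ)) with hψ
  have hinj : Function.Injective ψ := by
    rintro ⟨a, b⟩ ⟨a', b'⟩ h
    simp only [hψ, Prod.mk.injEq] at h
    have h1 : (2 * a : ℤ) = 2 * a' := h.1
    have h2 : (4 * b + 2 : ℤ) = 4 * b' + 2 := h.2
    have : a = a' := by omega
    have : b = b' := by omega
    simp_all
  set F := (Finset.range (A+1) ×ˢ Finset.range (B+1)).image ψ with hF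
  have hsub : (↑F : Set (ℤ × ℤ)) ⊆ S := by
    intro x hx
    simp only [hF, Finset.coe_image, Set.mem_image, Finset.mem_coe, Finset.mem_product,
      Finset.mem_range] at hx
    obtain ⟨⟨a, b⟩, ⟨ha, hb⟩, rfl⟩ := hx
    have haR : (a:ℝ) ≤ r/5 := le_trans (by exact_mod_cast Nat.lt_succ_iff.1 ha) hAle
    have hbR : (b:ℝ) ≤ (H-2)/4 := le_trans (by exact_mod_cast Nat.lt_succ_iff.1 hb) hBle
    have ha0 : (0:ℝ) ≤ (a:ℝ) := Nat.cast_nonneg a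
    have hb0 : (0:ℝ) ≤ (b:ℝ) := Nat.cast_nonneg b
    refine ⟨?_, ?_, ?_, ?_⟩
    · show |(5 * ((2 * (a:ℤ) : ℤ)) : ℝ)| ≤ H
      push_cast
      rw [abs_of_nonneg (by positivity)]
      nlinarith
    · show |(5 * (((2 * (a:ℤ) : ℤ)) : ℝ) ^ 2)| ≤ H
      push_cast
      rw [abs_of_nonneg (by positivity)]
      nlinarith
    · show |(((4 * (b:ℤ) + 2 : ℤ)) : ℝ)| ≤ H
      push_cast
      rw [abs_of_nonneg (by positivity)]
      linarith
    · exact main1 (2 * a) (4 * b + 2) 2 Nat.prime_two ⟨2*b+1, by ring⟩ ⟨a, rfl⟩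
        (by intro hdvd; norm_num at hdvd)
  have hfin : S.Finite := by
    apply Set.Finite.subset (Set.finite_Icc ((-⌈H⌉, -⌈H⌉) : ℤ × ℤ) ((⌈H⌉, ⌈H⌉) : ℤ × ℤ))
    rintro ⟨s, t⟩ ⟨h1, _, h3, _⟩
    have hs : |(s:ℝ)| ≤ H := by
      have h5 : |(5 * (s:ℝ))| = 5 * |(s:ℝ)| := by
        rw [abs_mul, abs_of_nonneg (by norm_num : (0:ℝ) ≤ 5)]
      have := abs_nonneg (s:ℝ)
      rw [h5] at h1
      linarith
    have ht : |(t:ℝ)| ≤ H := h3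
    have hceil : H ≤ (⌈H⌉ : ℝ) := Int.le_ceil H
    rw [Set.mem_Icc, Prod.le_def, Prod.le_def]
    obtain ⟨hs1, hs2⟩ := abs_le.1 hs
    obtain ⟨ht1, ht2⟩ := abs_le.1 ht
    have e1 : -((⌈H⌉:ℤ):ℝ) ≤ (s:ℝ) := by push_cast; linarith
    have e2 : (s:ℝ) ≤ ((⌈H⌉:ℤ):ℝ) := by linarith
    have e3 : -((⌈H⌉:ℤ):ℝ) ≤ (t:ℝ) := by push_cast; linarith
    have e4 : (t:ℝ) ≤ ((⌈H⌉:ℤ):ℝ) := by linarith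
    exact ⟨⟨by exact_mod_cast e1, by exact_mod_cast e3⟩, by exact_mod_cast e2, by exact_mod_cast e4⟩
  have hcard : F.card = (A+1)*(B+1) := by
    rw [hF, Finset.card_image_of_injective _ hinj, Finset.card_product, Finset.card_range,
      Finset.card_range]
  have hle : ((A+1)*(B+1) : ℕ) ≤ S.ncard := by
    rw [← hcard, ← Set.ncard_coe_finset F]
    exact Set.ncard_le_ncard hsub hfin
  have hpow : H ^ ((3:ℝ)/2) = H * r := by
    rw [show (3:ℝ)/2 = 1 + 1/2 by norm_num, Real.rpow_add hH0, Real.rpow_one, hr,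
      ← Real.sqrt_eq_rpow]
  rw [hpow]
  have h3 : H/8 ≤ (B:ℝ)+1 := by linarith
  have h4 : r/5 ≤ (A:ℝ)+1 := hAgt.le
  calc (1:ℝ)/40 * (H*r) = (r/5) * (H/8) := by ring
    _ ≤ ((A:ℝ)+1) * ((B:ℝ)+1) := mul_le_mul h4 h3 (by linarith) (by linarith)
    _ = (((A+1)*(B+1) : ℕ) : ℝ) := by push_cast; ring
    _ ≤ (S.ncard : ℝ) := by exact_mod_cast hle
end

section
/- Let D ≥ 2 and let F ∈ ℚ[d] have degree D. Suppose polynomials f₀, f₁, f₂, f₃, f₄ ∈ ℚ[d] and b₂, b₄, b₆, 𝒟 ∈ ℚ[d] satisfy deg b₂ = 1, deg b₄ = 2, deg b₆ = 3, deg 𝒟 = 5, together with the system: f₄ − F = 2b₂; f₃ − f₄F = b₂² + 2b₄; f₂ − f₃F = 2b₂b₄ + 2b₆; f₁ − f₂F = b₄² + 2b₂b₆; f₀ − f₁F = 2b₄b₆ − 𝒟; −f₀F = b₆². Then a contradiction arises; i.e. no such data exist. -/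
theorem sextic_resolvent_linear_factor_degree_contradiction
    (m : ℕ) (hm : 2 ≤ m)
    (F f₀ f₁ f₂ f₃ f₄ b₂ b₄ b₆ 𝒟 : Polynomial ℚ)
    (hF : F.natDegree = m)
    (hb2 : b₂.natDegree = 1) (hb4 : b₄.natDegree = 2) (hb6 : b₆.natDegree = 3)
    (h𝒟 : 𝒟.natDegree = 5)
    (e1 : f₄ - F = 2 * b₂)
    (e2 : f₃ - f₄ * F = b₂ ^ 2 + 2 * b₄)
    (e3 : f₂ - f₃ * F = 2 * b₂ * b₄ + 2 * b₆)
    (e4 : f₁ - f₂ * F = b₄ ^ 2 + 2 * b₂ * b₆)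
    (e5 : f₀ - f₁ * F = 2 * b₄ * b₆ - 𝒟)
    (e6 : -(f₀ * F) = b₆ ^ 2) :
    False := by
  have hFne : F ≠ 0 := fun h => by simp [h] at hF; omega
  have two_deg : (2 : Polynomial ℚ).natDegree = 0 := by simp
  -- f₄
  have h4 : f₄ = F + 2 * b₂ := by linear_combination e1
  have d4 : f₄.natDegree = m := by
    rw [h4, Polynomial.natDegree_add_eq_left_of_natDegree_lt, hF]
    calc (2 * b₂).natDegree ≤ (2 : Polynomial ℚ).natDegree + b₂.natDegree :=
          Polynomial.natDegree_mul_le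
      _ < F.natDegree := by rw [two_deg, hb2]; omega
  have n4 : f₄ ≠ 0 := fun h => by simp [h] at d4; omega
  -- f₃
  have h3 : f₃ = f₄ * F + (b₂ ^ 2 + 2 * b₄) := by linear_combination e2
  have dprod4 : (f₄ * F).natDegree = 2 * m := by
    rw [Polynomial.natDegree_mul n4 hFne, d4, hF]; ring
  have d3 : f₃.natDegree = 2 * m := by
    rw [h3, Polynomial.natDegree_add_eq_left_of_natDegree_lt, dprod4]
    have h1 : (b₂ ^ 2).natDegree ≤ 2 := by
      simpa [hb2] using Polynomial.natDegree_pow_le (p := b₂) (n := 2)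
    have h2 : (2 * b₄).natDegree ≤ 2 := by
      calc (2 * b₄).natDegree ≤ (2 : Polynomial ℚ).natDegree + b₄.natDegree :=
            Polynomial.natDegree_mul_le
        _ ≤ 2 := by rw [two_deg, hb4]
    have := Polynomial.natDegree_add_le (b₂ ^ 2) (2 * b₄)
    rw [dprod4]; omega
  have n3 : f₃ ≠ 0 := fun h => by simp [h] at d3; omega
  -- f₂
  have h2 : f₂ = f₃ * F + (2 * b₂ * b₄ + 2 * b₆) := by linear_combination e3
  have dprod3 : (f₃ * F).natDegree = 3 * m := by
    rw [Polynomial.natDegree_mul n3 hFne, d3, hF]; ring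
  have d2 : f₂.natDegree = 3 * m := by
    rw [h2, Polynomial.natDegree_add_eq_left_of_natDegree_lt, dprod3]
    have h1 : (2 * b₂ * b₄).natDegree ≤ 3 := by
      calc (2 * b₂ * b₄).natDegree ≤ (2 * b₂).natDegree + b₄.natDegree :=
            Polynomial.natDegree_mul_le
        _ ≤ (2 : Polynomial ℚ).natDegree + b₂.natDegree + b₄.natDegree := by
            have := Polynomial.natDegree_mul_le (p := (2 : Polynomial ℚ)) (q := b₂); omega
        _ ≤ 3 := by rw [two_deg, hb2, hb4]
    have h2' : (2 * b₆).natDegree ≤ 3 := by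
      calc (2 * b₆).natDegree ≤ (2 : Polynomial ℚ).natDegree + b₆.natDegree :=
            Polynomial.natDegree_mul_le
        _ ≤ 3 := by rw [two_deg, hb6]
    have := Polynomial.natDegree_add_le (2 * b₂ * b₄) (2 * b₆)
    rw [dprod3]; omega
  have n2 : f₂ ≠ 0 := fun h => by simp [h] at d2; omega
  -- f₁
  have h1 : f₁ = f₂ * F + (b₄ ^ 2 + 2 * b₂ * b₆) := by linear_combination e4
  have dprod2 : (f₂ * F).natDegree = 4 * m := by
    rw [Polynomial.natDegree_mul n2 hFne, d2, hF]; ring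
  have d1 : f₁.natDegree = 4 * m := by
    rw [h1, Polynomial.natDegree_add_eq_left_of_natDegree_lt, dprod2]
    have ha : (b₄ ^ 2).natDegree ≤ 4 := by
      simpa [hb4] using Polynomial.natDegree_pow_le (p := b₄) (n := 2)
    have hb : (2 * b₂ * b₆).natDegree ≤ 4 := by
      calc (2 * b₂ * b₆).natDegree ≤ (2 * b₂).natDegree + b₆.natDegree :=
            Polynomial.natDegree_mul_le
        _ ≤ (2 : Polynomial ℚ).natDegree + b₂.natDegree + b₆.natDegree := by
            have := Polynomial.natDegree_mul_le (p := (2 : Polynomial ℚ)) (q := b₂); omega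
        _ ≤ 4 := by rw [two_deg, hb2, hb6]
    have := Polynomial.natDegree_add_le (b₄ ^ 2) (2 * b₂ * b₆)
    rw [dprod2]; omega
  have n1 : f₁ ≠ 0 := fun h => by simp [h] at d1; omega
  -- f₀
  have h0 : f₀ = f₁ * F + (2 * b₄ * b₆ - 𝒟) := by linear_combination e5
  have dprod1 : (f₁ * F).natDegree = 5 * m := by
    rw [Polynomial.natDegree_mul n1 hFne, d1, hF]; ring
  have d0 : f₀.natDegree = 5 * m := by
    rw [h0, Polynomial.natDegree_add_eq_left_of_natDegree_lt, dprod1]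
    have ha : (2 * b₄ * b₆).natDegree ≤ 5 := by
      calc (2 * b₄ * b₆).natDegree ≤ (2 * b₄).natDegree + b₆.natDegree :=
            Polynomial.natDegree_mul_le
        _ ≤ (2 : Polynomial ℚ).natDegree + b₄.natDegree + b₆.natDegree := by
            have := Polynomial.natDegree_mul_le (p := (2 : Polynomial ℚ)) (q := b₄); omega
        _ ≤ 5 := by rw [two_deg, hb4, hb6]
    have := Polynomial.natDegree_sub_le (2 * b₄ * b₆) 𝒟
    rw [dprod1]; omega
  have n0 : f₀ ≠ 0 := fun h => by simp [h] at d0; omega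
  -- final contradiction
  have hfinal : (-(f₀ * F)).natDegree = 6 * m := by
    rw [Polynomial.natDegree_neg, Polynomial.natDegree_mul n0 hFne, d0, hF]; ring
  have hb6sq : (b₆ ^ 2).natDegree = 6 := by
    have hb6ne : b₆ ≠ 0 := fun h => by simp [h] at hb6
    rw [Polynomial.natDegree_pow, hb6]
  rw [e6, hb6sq] at hfinal
  omega
end

section
/- Let f ∈ ℤ[X] be monic, irreducible of degree n with Galois group G_f = S_n (acting on an indexing of the roots α₁,…,α_n), let G be a proper subgroup of S_n, and let Ψ(y) = Π_{σ ∈ S_n/G} (y − r_σ) where r_σ = Σ_{k ≤ |G|} w_k Σ_{τ ∈ G} Π_{i ≤ n}(α_{στ(i)} + 𝔤)^{k e_i} for fixed positive integers w_k, e_i and 𝔤 ∈ ℤ. If Ψ is separable (its roots r_σ, σ ranging over left coset representatives, are pairwise distinct), then Ψ ∈ ℚ[y] and Ψ is irreducible over ℚ. -/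
set_option maxHeartbeats 1000000

open Polynomial in
theorem resolvent_irreducible_of_full_galois_and_separable
    (n : ℕ) (hn : 2 ≤ n) (f : Polynomial ℤ) (hmonic : f.Monic)
    (hdeg : f.natDegree = n) (hirr : Irreducible (f.map (Int.castRingHom ℚ)))
    (α : Fin n → ℂ)
    (hroots : f.map (Int.castRingHom ℂ) = ∏ i : Fin n, (X - C (α i)))
    (hGal : ∀ π : Equiv.Perm (Fin n), ∃ φ : ℂ ≃ₐ[ℚ] ℂ, ∀ i, φ (α i) = α (π i))
    (G : Subgroup (Equiv.Perm (Fin n))) (hG : G ≠ ⊤)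
    (w : ℕ → ℕ) (e : Fin n → ℕ) (hw : ∀ k, 0 < w k) (he : ∀ i, 0 < e i) (g : ℤ)
    (r : Equiv.Perm (Fin n) → ℂ)
    (hr : ∀ π, r π = ∑ k ∈ Finset.Icc 1 (Nat.card G), (w k : ℂ) *
        ∑ᶠ τ ∈ (G : Set (Equiv.Perm (Fin n))),
          ∏ i : Fin n, (α (π (τ i)) + (g : ℂ)) ^ (k * e i))
    (σ : Fin G.index → Equiv.Perm (Fin n))
    (hcoset : ∀ π : Equiv.Perm (Fin n), ∃! j : Fin G.index, (σ j)⁻¹ * π ∈ G)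
    (hsep : Function.Injective fun j : Fin G.index => r (σ j))
    (Ψ : Polynomial ℂ) (hΨ : Ψ = ∏ j : Fin G.index, (X - C (r (σ j)))) :
    ∃ Ψ₀ : Polynomial ℚ, Ψ₀.map (algebraMap ℚ ℂ) = Ψ ∧ Irreducible Ψ₀ := by
  classical
  subst hΨ
  set q : Polynomial ℚ := f.map (Int.castRingHom ℚ) with hq_def
  have hqmap : q.map (algebraMap ℚ ℂ) = ∏ i : Fin n, (X - C (α i)) := by
    rw [hq_def, Polynomial.map_map, ← hroots]
    congr 1
  have hqmonic : q.Monic := hmonic.map _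
  have hqsep : q.Separable := hirr.separable
  have hαinj : Function.Injective α := by
    have h := hqsep.map (f := algebraMap ℚ ℂ)
    rw [hqmap] at h
    exact separable_prod_X_sub_C_iff.mp h
  have hαroot : ∀ i, aeval (α i) q = 0 := by
    intro i
    rw [Polynomial.aeval_def, eval₂_eq_eval_map, hqmap, eval_prod]
    exact Finset.prod_eq_zero (Finset.mem_univ i) (by simp)
  have hrange : ∀ x : ℂ, aeval x q = 0 → ∃ i, α i = x := by
    intro x hx
    rw [Polynomial.aeval_def, eval₂_eq_eval_map, hqmap, eval_prod] at hx
    obtain ⟨i, -, hi⟩ := Finset.prod_eq_zero_iff.mp hx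
    simp only [eval_sub, eval_X, eval_C, sub_eq_zero] at hi
    exact ⟨i, hi.symm⟩
  -- splitting field E
  set E : IntermediateField ℚ ℂ := IntermediateField.adjoin ℚ (q.rootSet ℂ) with hE_def
  have hmemE : ∀ i, α i ∈ E := by
    intro i
    apply IntermediateField.subset_adjoin
    rw [Polynomial.mem_rootSet]
    exact ⟨hqmonic.ne_zero, hαroot i⟩
  have hq_splits : (q.map (algebraMap ℚ ℂ)).Splits := IsAlgClosed.splits _
  haveI hSF : IsSplittingField ℚ E q :=
    IntermediateField.adjoin_rootSet_isSplittingField hq_splits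
  haveI : FiniteDimensional ℚ E := IsSplittingField.finiteDimensional E q
  haveI : Normal ℚ E := Normal.of_isSplittingField q
  set αE : Fin n → E := fun i => ⟨α i, hmemE i⟩ with hαE_def
  have hαEinj : Function.Injective αE := by
    intro i j h
    exact hαinj (congrArg (fun z : E => (z : ℂ)) h)
  choose φ hφ using hGal
  -- finsum to finset sum
  set GF : Finset (Equiv.Perm (Fin n)) := (G : Set (Equiv.Perm (Fin n))).toFinset with hGF_def
  have hGFmem : ∀ τ, τ ∈ GF ↔ τ ∈ G := by intro τ; rw [hGF_def, Set.mem_toFinset]; rfl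
  have hGFsum : ∀ (F : Equiv.Perm (Fin n) → ℂ),
      (∑ᶠ τ ∈ (G : Set (Equiv.Perm (Fin n))), F τ) = ∑ τ ∈ GF, F τ := by
    intro F
    rw [← finsum_mem_coe_finset]
    congr 1
    rw [hGF_def, Set.coe_toFinset]
  have hr' : ∀ ρ, r ρ = ∑ k ∈ Finset.Icc 1 (Nat.card G), (w k : ℂ) *
      ∑ τ ∈ GF, ∏ i : Fin n, (α (ρ (τ i)) + (g : ℂ)) ^ (k * e i) := by
    intro ρ
    rw [hr ρ]
    exact Finset.sum_congr rfl fun k _ => by rw [hGFsum]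
  -- r lands in E
  have hrE : ∀ ρ, r ρ ∈ E := by
    intro ρ
    rw [hr']
    exact sum_mem fun k _ => mul_mem (natCast_mem E (w k)) (sum_mem fun τ _ =>
      prod_mem fun i _ => pow_mem (add_mem (hmemE _) (intCast_mem E g)) _)
  set rE : Equiv.Perm (Fin n) → E := fun ρ => ⟨r ρ, hrE ρ⟩ with hrE_def
  -- right invariance on cosets
  have hrcoset : ∀ ρ τ₀, τ₀ ∈ G → r (ρ * τ₀) = r ρ := by
    intro ρ τ₀ hτ₀
    rw [hr', hr']
    refine Finset.sum_congr rfl fun k _ => ?_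
    congr 1
    refine Finset.sum_equiv (Equiv.mulLeft τ₀) ?_ ?_
    · intro τ
      rw [hGFmem, hGFmem, Equiv.coe_mulLeft]
      exact (Subgroup.mul_mem_cancel_left G hτ₀).symm
    · intro τ _
      rfl
  -- Galois action on r
  have hrgal : ∀ π ρ, φ π (r ρ) = r (π * ρ) := by
    intro π ρ
    rw [hr' ρ, hr' (π * ρ), map_sum]
    refine Finset.sum_congr rfl fun k _ => ?_
    rw [map_mul, map_natCast, map_sum]
    congr 1
    refine Finset.sum_congr rfl fun τ _ => ?_
    rw [map_prod]
    refine Finset.prod_congr rfl fun i _ => ?_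
    rw [map_pow, map_add, hφ, map_intCast]
    rfl
  -- restricted automorphisms
  set ψ : Equiv.Perm (Fin n) → (E ≃ₐ[ℚ] E) := fun π => (φ π).restrictNormal E with hψ_def
  have hψ : ∀ π i, ψ π (αE i) = αE (π i) := by
    intro π i
    apply Subtype.ext
    have h := AlgEquiv.restrictNormal_commutes (φ π) E (αE i)
    have h2 : algebraMap E ℂ (αE i) = α i := rfl
    rw [h2, hφ] at h
    exact h
  have hψinj : Function.Injective ψ := by
    intro π π' h
    apply Equiv.ext
    intro i
    have := congrArg (fun gE : E ≃ₐ[ℚ] E => gE (αE i)) h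
    simp only [hψ] at this
    exact hαEinj this
  -- extensionality on generators
  have hext : ∀ (g₁ g₂ : E ≃ₐ[ℚ] E), (∀ i, g₁ (αE i) = g₂ (αE i)) → g₁ = g₂ := by
    intro g₁ g₂ h
    have hAH : (g₁ : E →ₐ[ℚ] E) = (g₂ : E →ₐ[ℚ] E) := by
      apply IntermediateField.adjoin_algHom_ext
      intro x hx
      obtain ⟨i, hi⟩ := hrange x (by
        rw [Polynomial.mem_rootSet] at hx
        exact hx.2)
      have hxα : (⟨x, IntermediateField.subset_adjoin _ _ hx⟩ : E) = αE i := by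
        apply Subtype.ext; exact hi.symm
      rw [hxα]
      exact h i
    exact AlgEquiv.ext fun y => congrFun (congrArg (fun F : E →ₐ[ℚ] E => (F : E → E)) hAH) y
  -- every automorphism permutes the αE
  have ht' : ∀ (gE : E ≃ₐ[ℚ] E) (i : Fin n), ∃ j, gE (αE i) = αE j := by
    intro gE i
    have h0 : aeval (αE i) q = 0 := by
      have : algebraMap E ℂ (aeval (αE i) q) = 0 := by
        rw [← Polynomial.aeval_algebraMap_apply ℂ (αE i) q]
        exact hαroot i
      exact (map_eq_zero_iff _ (algebraMap E ℂ).injective).mp this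
    have h1 : aeval (gE (αE i)) q = 0 := by
      rw [Polynomial.aeval_algHom_apply, h0, map_zero]
    have h2 : aeval ((gE (αE i) : ℂ)) q = 0 := by
      have : algebraMap E ℂ (aeval (gE (αE i)) q) = 0 := by rw [h1, map_zero]
      rwa [← Polynomial.aeval_algebraMap_apply ℂ (gE (αE i)) q] at this
    obtain ⟨j, hj⟩ := hrange _ h2
    exact ⟨j, Subtype.ext hj.symm⟩
  choose t ht using ht'
  have htinv : ∀ (gE : E ≃ₐ[ℚ] E) i, t gE.symm (t gE i) = i := by
    intro gE i
    apply hαEinj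
    rw [← ht gE.symm (t gE i), ← ht gE i, AlgEquiv.symm_apply_apply]
  set Θ : (E ≃ₐ[ℚ] E) → Equiv.Perm (Fin n) :=
    fun gE => ⟨t gE, t gE.symm, htinv gE, fun i => by
      have := htinv gE.symm i; rwa [AlgEquiv.symm_symm] at this⟩ with hΘ_def
  have hΘinj : Function.Injective Θ := by
    intro g₁ g₂ h
    refine hext g₁ g₂ fun i => ?_
    rw [ht g₁ i, ht g₂ i]
    congr 1
    exact congrFun (congrArg (fun e : Equiv.Perm (Fin n) => (e : Fin n → Fin n)) h) i
  have hψsurj : Function.Surjective ψ := by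
    have hcard : Fintype.card (Equiv.Perm (Fin n)) = Fintype.card (E ≃ₐ[ℚ] E) :=
      le_antisymm (Fintype.card_le_of_injective ψ hψinj)
        (Fintype.card_le_of_injective Θ hΘinj)
    exact ((Fintype.bijective_iff_injective_and_card ψ).mpr ⟨hψinj, hcard⟩).surjective
  -- index positive
  have hidx : 0 < G.index := Nat.pos_of_ne_zero Subgroup.index_ne_zero_of_finite
  set j₀ : Fin G.index := ⟨0, hidx⟩ with hj₀_def
  set x : ℂ := r (σ j₀) with hx_def
  have hxE : algebraMap E ℂ (rE (σ j₀)) = x := rfl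
  have hxintE : IsIntegral ℚ (rE (σ j₀)) := IsIntegral.of_finite ℚ _
  have hxint : IsIntegral ℚ x := by
    rw [← hxE]
    exact hxintE.algebraMap
  set p : Polynomial ℚ := minpoly ℚ x with hp_def
  have hp_eq : minpoly ℚ (rE (σ j₀)) = p := by
    rw [hp_def, ← hxE, minpoly.algebraMap_eq (algebraMap E ℂ).injective]
  have hpirr : Irreducible p := minpoly.irreducible hxint
  have hpmonic : p.Monic := minpoly.monic hxint
  -- every r (σ j) is a root of p
  have claimA : ∀ j : Fin G.index, aeval (r (σ j)) p = 0 := by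
    intro j
    have h1 : φ (σ j * (σ j₀)⁻¹) x = r (σ j) := by
      rw [hx_def, hrgal, inv_mul_cancel_right]
    have h2 : aeval (φ (σ j * (σ j₀)⁻¹) x) p = φ (σ j * (σ j₀)⁻¹) (aeval x p) :=
      Polynomial.aeval_algHom_apply ((φ (σ j * (σ j₀)⁻¹)) : ℂ →ₐ[ℚ] ℂ) x p
    rw [← h1, h2, minpoly.aeval, map_zero]
  set pc : Polynomial ℂ := p.map (algebraMap ℚ ℂ) with hpc_def
  have hpc_monic : pc.Monic := hpmonic.map _
  have hmem_roots : ∀ j : Fin G.index, r (σ j) ∈ pc.roots := by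
    intro j
    rw [Polynomial.mem_roots hpc_monic.ne_zero]
    rw [Polynomial.IsRoot, hpc_def, Polynomial.eval_map, ← Polynomial.aeval_def]
    exact claimA j
  have hroots_sub : ∀ y ∈ pc.roots, ∃ j : Fin G.index, y = r (σ j) := by
    intro y hy
    have hsplE : (p.map (algebraMap ℚ E)).Splits := by
      have h := Normal.splits (inferInstance : Normal ℚ E) (rE (σ j₀))
      rwa [hp_eq] at h
    have hmapmap : pc = (p.map (algebraMap ℚ E)).map (algebraMap E ℂ) := by
      rw [Polynomial.map_map, ← IsScalarTower.algebraMap_eq]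
    rw [hmapmap, hsplE.roots_map (algebraMap E ℂ)] at hy
    obtain ⟨yE, hyE, rfl⟩ := Multiset.mem_map.mp hy
    have hyE0 : aeval yE p = 0 := by
      have h := (Polynomial.mem_roots (hpmonic.map (algebraMap ℚ E)).ne_zero).mp hyE
      rwa [Polynomial.IsRoot, Polynomial.eval_map, ← Polynomial.aeval_def] at h
    obtain ⟨gE, hgE⟩ := minpoly.exists_algEquiv_of_root' (hxintE.isAlgebraic)
      (by rw [hp_eq]; exact hyE0)
    obtain ⟨π, rfl⟩ := hψsurj gE
    have hy' : algebraMap E ℂ yE = r (π * σ j₀) := by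
      rw [← hgE]
      have h := AlgEquiv.restrictNormal_commutes (φ π) E (rE (σ j₀))
      rw [hxE] at h
      simp only [hψ_def]
      rw [h, hx_def]
      exact hrgal π (σ j₀)
    obtain ⟨j, hj, -⟩ := hcoset (π * σ j₀)
    refine ⟨j, ?_⟩
    have hfac : π * σ j₀ = σ j * ((σ j)⁻¹ * (π * σ j₀)) := by group
    rw [hy', hfac, hrcoset _ _ hj]
  -- multiset equality of roots
  set M : Multiset ℂ := Multiset.map (fun j : Fin G.index => r (σ j)) Finset.univ.val
    with hM_def
  have hMnodup : M.Nodup := Multiset.Nodup.map hsep Finset.univ.nodup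
  have hRnodup : pc.roots.Nodup := by
    apply Polynomial.nodup_roots
    exact (hpirr.separable).map
  have hMR : M = pc.roots := by
    refine le_antisymm ((Multiset.le_iff_subset hMnodup).mpr ?_)
      ((Multiset.le_iff_subset hRnodup).mpr ?_)
    · intro a ha
      obtain ⟨j, -, rfl⟩ := Multiset.mem_map.mp ha
      exact hmem_roots j
    · intro a ha
      obtain ⟨j, hj⟩ := hroots_sub a ha
      rw [hM_def]
      refine Multiset.mem_map.mpr ⟨j, ?_, hj.symm⟩
      simp
  have hfinal : p.map (algebraMap ℚ ℂ) = ∏ j : Fin G.index, (X - C (r (σ j))) := by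
    have hsplit : pc.Splits := IsAlgClosed.splits pc
    have h1 := hsplit.eq_prod_roots_of_monic hpc_monic
    rw [← hpc_def, h1, ← hMR, hM_def, Multiset.map_map]
    rfl
  exact ⟨p, hfinal, hpirr⟩
end

section
/- Let α₁,…,α₆ be the roots of an irreducible monic sextic f ∈ ℤ[X], let H₁₂₀ ≤ S₆ be the group generated by (1 2 6)(3 5 4), (1 2 3 4 5) and (2 3 5 4), and let θ = (α₁α₂+α₃α₅+α₄α₆)(α₁α₃+α₄α₅+α₂α₆)(α₃α₄+α₁α₆+α₂α₅)(α₁α₅+α₂α₄+α₃α₆)(α₁α₄+α₂α₃+α₅α₆). If the Galois group G_f of f satisfies G_f ≤ τH₁₂₀τ^{−1} for some τ ∈ S₆, then τθ (the image of θ under permuting indices by τ) is a rational integer. -/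
open Polynomial IntermediateField

private theorem aux_aevalEquiv_C {R K : Type*} [CommRing R] [CommRing K] [Algebra R K]
    {ι : Type*} {v : ι → K} (hv : AlgebraicIndependent R v) (r : R) :
    hv.aevalEquiv (MvPolynomial.C r) = algebraMap R (Algebra.adjoin R (Set.range v)) r := by
  have h1 := hv.algebraMap_aevalEquiv (MvPolynomial.C r)
  rw [MvPolynomial.aeval_C] at h1
  have h2 : (algebraMap (Algebra.adjoin R (Set.range v)) K)
      (algebraMap R (Algebra.adjoin R (Set.range v)) r) = algebraMap R K r :=
    (IsScalarTower.algebraMap_apply R _ K r).symm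
  exact Subtype.ext (by rw [← h2] at h1; exact h1)

private theorem exists_ringEquiv_ext {S R K L : Type*} [Field S] [Field R] [Field K] [Field L]
    [IsAlgClosed K] [IsAlgClosed L] [Algebra S K] [Algebra R L]
    {ι κ : Type*} {v : ι → K} {w : κ → L} (g : S ≃+* R) (e : ι ≃ κ)
    (hv : IsTranscendenceBasis S v) (hw : IsTranscendenceBasis R w) :
    ∃ φ : K ≃+* L, ∀ s : S, φ (algebraMap S K s) = algebraMap R L (g s) := by
  letI := IsAlgClosed.isAlgClosure_of_transcendence_basis v hv
  letI := IsAlgClosed.isAlgClosure_of_transcendence_basis w hw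
  set mid : ↥(Algebra.adjoin S (Set.range v)) ≃+* ↥(Algebra.adjoin R (Set.range w)) :=
    hv.1.aevalEquiv.symm.toRingEquiv.trans ((MvPolynomial.mapEquiv ι g).trans
      ((MvPolynomial.renameEquiv R e).toRingEquiv.trans hw.1.aevalEquiv.toRingEquiv)) with hmid
  refine ⟨IsAlgClosure.equivOfEquiv K L mid, fun s => ?_⟩
  have h1 : algebraMap S K s =
      algebraMap (Algebra.adjoin S (Set.range v)) K
        (algebraMap S (Algebra.adjoin S (Set.range v)) s) :=
    IsScalarTower.algebraMap_apply S _ K s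
  rw [h1, IsAlgClosure.equivOfEquiv_algebraMap]
  have h2 : mid (algebraMap S (Algebra.adjoin S (Set.range v)) s)
      = algebraMap R (Algebra.adjoin R (Set.range w)) (g s) := by
    rw [hmid, ← aux_aevalEquiv_C hv.1 s]
    simp only [RingEquiv.trans_apply, AlgEquiv.toRingEquiv_eq_coe, AlgEquiv.coe_ringEquiv,
      AlgEquiv.symm_apply_apply]
    rw [show (MvPolynomial.mapEquiv ι g) (MvPolynomial.C s) = MvPolynomial.C (g s) from
        MvPolynomial.map_C _ s,
      show (MvPolynomial.renameEquiv R e) (MvPolynomial.C (g s)) = MvPolynomial.C (g s) from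
        MvPolynomial.rename_C _ (g s)]
    exact aux_aevalEquiv_C hw.1 (g s)
  rw [h2, ← IsScalarTower.algebraMap_apply]

private theorem exists_algEquiv_complex {x y : ℂ} (hx : IsIntegral ℚ x)
    (hy : Polynomial.aeval y (minpoly ℚ x) = 0) :
    ∃ φ : ℂ ≃ₐ[ℚ] ℂ, φ x = y := by
  have hxa : IsAlgebraic ℚ x := hx.isAlgebraic
  have hmp : minpoly ℚ x = minpoly ℚ y := (minpoly.eq_of_root hxa hy).symm
  have hyi : IsIntegral ℚ y := by
    refine ⟨minpoly ℚ x, minpoly.monic hx, ?_⟩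
    rwa [Polynomial.aeval_def] at hy
  let g := minpoly.algEquiv hxa hmp
  obtain ⟨s, hs⟩ := exists_isTranscendenceBasis (↥ℚ⟮x⟯) ℂ
  obtain ⟨t, ht⟩ := exists_isTranscendenceBasis (↥ℚ⟮y⟯) ℂ
  haveI : FiniteDimensional ℚ ℚ⟮x⟯ := IntermediateField.adjoin.finiteDimensional hx
  haveI : FiniteDimensional ℚ ℚ⟮y⟯ := IntermediateField.adjoin.finiteDimensional hyi
  haveI : Countable ↥ℚ⟮x⟯ :=
    Countable.of_equiv _ (Module.Free.chooseBasis ℚ ℚ⟮x⟯).repr.toEquiv.symm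
  haveI : Countable ↥ℚ⟮y⟯ :=
    Countable.of_equiv _ (Module.Free.chooseBasis ℚ ℚ⟮y⟯).repr.toEquiv.symm
  have hC : Cardinal.aleph0 < Cardinal.mk ℂ := by
    rw [Cardinal.mk_complex]; exact Cardinal.aleph0_lt_continuum
  have hs' := IsAlgClosed.cardinal_eq_cardinal_transcendence_basis_of_aleph0_lt' _ hs
    Cardinal.mk_le_aleph0 hC
  have ht' := IsAlgClosed.cardinal_eq_cardinal_transcendence_basis_of_aleph0_lt' _ ht
    Cardinal.mk_le_aleph0 hC
  obtain ⟨e⟩ := Cardinal.eq.1 (hs'.symm.trans ht')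
  obtain ⟨φ, hφ⟩ := exists_ringEquiv_ext g.toRingEquiv e hs ht
  refine ⟨AlgEquiv.ofRingEquiv (f := φ) (fun q => ?_), ?_⟩
  · rw [eq_ratCast (algebraMap ℚ ℂ) q, map_ratCast φ q]
  · show φ x = y
    have hx' : x = algebraMap (↥ℚ⟮x⟯) ℂ (AdjoinSimple.gen ℚ x) :=
      (AdjoinSimple.algebraMap_gen ℚ x).symm
    rw [hx', hφ]
    rw [show g.toRingEquiv (AdjoinSimple.gen ℚ x) = AdjoinSimple.gen ℚ y from
      minpoly.algEquiv_apply hxa hmp]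
    exact AdjoinSimple.algebraMap_gen ℚ y

private theorem rational_of_fixed {x : ℂ} (hx : IsIntegral ℚ x)
    (hfix : ∀ φ : ℂ ≃ₐ[ℚ] ℂ, φ x = x) : ∃ q : ℚ, x = (q : ℂ) := by
  have h1 : (minpoly ℚ x).natDegree = 1 := by
    have hsep : (minpoly ℚ x).Separable := (minpoly.irreducible hx).separable
    have hsplit : Splits ((minpoly ℚ x).map (algebraMap ℚ ℂ)) := IsAlgClosed.splits _
    set q := (minpoly ℚ x).map (algebraMap ℚ ℂ) with hqdef
    have hq0 : q ≠ 0 :=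
      (Polynomial.map_ne_zero_iff (algebraMap ℚ ℂ).injective).mpr (minpoly.ne_zero hx)
    have hall : ∀ z ∈ q.roots, x = z := by
      intro z hz
      have hz' : Polynomial.aeval z (minpoly ℚ x) = 0 := by
        have h : q.IsRoot z := (Polynomial.mem_roots hq0).1 hz
        rwa [Polynomial.IsRoot, hqdef, Polynomial.eval_map, ← Polynomial.aeval_def] at h
      obtain ⟨φ, hφ⟩ := exists_algEquiv_complex hx hz'
      rw [← hφ, hfix φ]
    have hcount : Multiset.count x q.roots = Multiset.card q.roots :=
      Multiset.count_eq_card.mpr hall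
    have hnodup : q.roots.Nodup := nodup_roots hsep.map
    have hle : Multiset.card q.roots ≤ 1 := by
      rw [← hcount]; exact Multiset.nodup_iff_count_le_one.mp hnodup x
    have hdeg : (minpoly ℚ x).natDegree = Multiset.card ((minpoly ℚ x).map (algebraMap ℚ ℂ)).roots := by
      rw [← natDegree_map (algebraMap ℚ ℂ)]; exact hsplit.natDegree_eq_card_roots
    rw [← hqdef] at hdeg
    have hpos := minpoly.natDegree_pos hx
    omega
  obtain ⟨q, hq⟩ := minpoly.natDegree_eq_one_iff.mp h1
  exact ⟨q, by rw [← hq]; exact (eq_ratCast (algebraMap ℚ ℂ) q).symm⟩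

theorem stauduhar_invariant_is_integer
    (f : Polynomial ℤ) (hmonic : f.Monic) (hdeg : f.natDegree = 6)
    (hirr : Irreducible (f.map (Int.castRingHom ℚ)))
    (α : Fin 6 → ℂ)
    (hroots : f.map (Int.castRingHom ℂ)
      = ∏ i : Fin 6, (Polynomial.X - Polynomial.C (α i)))
    (H120 : Subgroup (Equiv.Perm (Fin 6)))
    (hH : H120 = Subgroup.closure
      {c[(0 : Fin 6), 1, 5] * c[(2 : Fin 6), 4, 3],
       c[(0 : Fin 6), 1, 2, 3, 4], c[(1 : Fin 6), 2, 4, 3]})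
    (θ : Equiv.Perm (Fin 6) → ℂ)
    (hθ : ∀ π : Equiv.Perm (Fin 6), θ π =
      (α (π 0) * α (π 1) + α (π 2) * α (π 4) + α (π 3) * α (π 5)) *
      (α (π 0) * α (π 2) + α (π 3) * α (π 4) + α (π 1) * α (π 5)) *
      (α (π 2) * α (π 3) + α (π 0) * α (π 5) + α (π 1) * α (π 4)) *
      (α (π 0) * α (π 4) + α (π 1) * α (π 3) + α (π 2) * α (π 5)) *
      (α (π 0) * α (π 3) + α (π 1) * α (π 2) + α (π 4) * α (π 5)))
    (τ : Equiv.Perm (Fin 6))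
    (hGf : ∀ φ : ℂ ≃ₐ[ℚ] ℂ, ∃ π : Equiv.Perm (Fin 6),
      τ⁻¹ * π * τ ∈ H120 ∧ ∀ i, φ (α i) = α (π i)) :
    ∃ m : ℤ, θ τ = (m : ℂ) := by
  -- integrality of the roots
  have hαint : ∀ i, IsIntegral ℤ (α i) := by
    intro i
    refine ⟨f, hmonic, ?_⟩
    have h : Polynomial.eval (α i) (f.map (Int.castRingHom ℂ)) = 0 := by
      rw [hroots, Polynomial.eval_prod]
      exact Finset.prod_eq_zero (Finset.mem_univ i) (by simp)
    rw [Polynomial.eval_map] at h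
    rwa [show algebraMap ℤ ℂ = Int.castRingHom ℂ from rfl]
  -- integrality of θ τ
  have hint : IsIntegral ℤ (θ τ) := by
    rw [hθ]
    have T : ∀ i j k l m n : Fin 6, IsIntegral ℤ (α i * α j + α k * α l + α m * α n) :=
      fun i j k l m n =>
        (((hαint i).mul (hαint j)).add ((hαint k).mul (hαint l))).add ((hαint m).mul (hαint n))
    exact ((((T _ _ _ _ _ _).mul (T _ _ _ _ _ _)).mul (T _ _ _ _ _ _)).mul
      (T _ _ _ _ _ _)).mul (T _ _ _ _ _ _)
  -- invariance of θ under right multiplication by H120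
  have hInv : ∀ σ ∈ H120, ∀ ρ : Equiv.Perm (Fin 6), θ (ρ * σ) = θ ρ := by
    rw [hH]
    intro σ hσ
    refine Subgroup.closure_induction ?_ ?_ ?_ ?_ hσ
    · intro x hx
      simp only [Set.mem_insert_iff, Set.mem_singleton_iff] at hx
      have key : ∀ (g : Equiv.Perm (Fin 6)) (ρ : Equiv.Perm (Fin 6)) (k m : Fin 6),
          g k = m → (ρ * g) k = ρ m := fun g ρ k m h => by
        rw [Equiv.Perm.mul_apply, h]
      rcases hx with rfl | rfl | rfl <;> intro ρ
      · rw [hθ, hθ, key _ ρ 0 1 (by decide), key _ ρ 1 5 (by decide), key _ ρ 2 4 (by decide),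
          key _ ρ 3 2 (by decide), key _ ρ 4 3 (by decide), key _ ρ 5 0 (by decide)]
        ring
      · rw [hθ, hθ, key _ ρ 0 1 (by decide), key _ ρ 1 2 (by decide), key _ ρ 2 3 (by decide),
          key _ ρ 3 4 (by decide), key _ ρ 4 0 (by decide), key _ ρ 5 5 (by decide)]
        ring
      · rw [hθ, hθ, key _ ρ 0 0 (by decide), key _ ρ 1 2 (by decide), key _ ρ 2 4 (by decide),
          key _ ρ 3 1 (by decide), key _ ρ 4 3 (by decide), key _ ρ 5 5 (by decide)]
        ring
    · intro ρ; rw [mul_one]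
    · intro a b _ _ ha hb ρ
      rw [← mul_assoc, hb, ha]
    · intro a _ ha ρ
      have h := ha (ρ * a⁻¹)
      rw [mul_assoc, inv_mul_cancel, mul_one] at h
      exact h.symm
  -- θ τ is fixed by every automorphism
  have hfix : ∀ φ : ℂ ≃ₐ[ℚ] ℂ, φ (θ τ) = θ τ := by
    intro φ
    obtain ⟨π, hπ, hφα⟩ := hGf φ
    have h1 : φ (θ τ) = θ (π * τ) := by
      rw [hθ τ, hθ (π * τ)]
      simp only [map_mul, map_add, hφα, Equiv.Perm.mul_apply]
    rw [h1, show π * τ = τ * (τ⁻¹ * π * τ) by group]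
    exact hInv _ hπ τ
  have hxq : IsIntegral ℚ (θ τ) := IsIntegral.tower_top hint
  obtain ⟨q, hq⟩ := rational_of_fixed hxq hfix
  have h3 : IsIntegral ℤ (q : ℚ) := by
    refine (isIntegral_algHom_iff (IsScalarTower.toAlgHom ℤ ℚ ℂ)
      ((IsScalarTower.toAlgHom ℤ ℚ ℂ).toRingHom.injective)).mp ?_
    have h4 : (IsScalarTower.toAlgHom ℤ ℚ ℂ) q = θ τ := by
      rw [hq]; exact eq_ratCast (algebraMap ℚ ℂ) q
    rw [h4]; exact hint
  obtain ⟨m, hm⟩ := IsIntegrallyClosed.isIntegral_iff.mp h3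
  refine ⟨m, ?_⟩
  rw [hq, ← hm, eq_intCast (algebraMap ℤ ℚ) m]
  norm_cast
end

section
/- The polynomial g(a₅,a₆,y) = y⁶ − 42a₅²y⁵ + 360a₅⁴y⁴ − (1360a₅⁶ − 46656a₆⁵)y³ + (2640a₅⁸ − 34992a₅²a₆⁵)y² − 2592a₅¹⁰y + 1024a₅¹² is irreducible over ℂ (i.e., absolutely irreducible as a polynomial in ℂ[a₅,a₆,y]). -/
noncomputable section StauduharAux

open Polynomial

/-- inner ring: ℂ[a₅] -/
abbrev SAux.A : Type := MvPolynomial (Fin 1) ℂ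
/-- middle ring: ℂ[a₅][y] -/
abbrev SAux.R : Type := Polynomial SAux.A

namespace SAux

def x : A := MvPolynomial.X 0
def c2 : A := 2 * x ^ 2
def c32 : A := 32 * x ^ 2
def q : R := X - C c32
def C5 : R := 11664 * X ^ 2 * (4 * X - C (3 * x ^ 2))
def C0 : R := (X - C c2) ^ 5 * (X - C c32)
def P : Polynomial R := C C5 * X ^ 5 + C C0

lemma x_ne : x ≠ 0 := MvPolynomial.X_ne_zero 0

lemma C5_deg : C5.natDegree = 3 := by
  unfold C5
  compute_degree!

lemma C5_ne : C5 ≠ 0 := by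
  apply Polynomial.ne_zero_of_natDegree_gt (n := 0)
  rw [C5_deg]; norm_num

lemma prime_q : Prime q := prime_X_sub_C c32

lemma q_ne : q ≠ 0 := prime_q.ne_zero

lemma natDegree_P : P.natDegree = 5 := by
  unfold P
  compute_degree!
  exact C5_ne

lemma coeff_P_five : P.coeff 5 = C5 := by
  simp [P, coeff_C]

lemma coeff_P_zero : P.coeff 0 = C0 := by
  simp [P, coeff_C]

lemma eval_C5_c2 : C5.eval c2 = 233280 * x ^ 6 := by
  simp [C5, c2]; ring

lemma eval_C5_c32 : C5.eval c32 = 1492992000 * x ^ 6 := by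
  simp [C5, c32]; ring

lemma not_dvd_C5_c2 : ¬ (X - C c2 ∣ C5) := by
  rw [dvd_iff_isRoot, IsRoot, eval_C5_c2]
  intro h
  have : (233280 : A) * x ^ 6 ≠ 0 := by
    apply mul_ne_zero
    · norm_num
    · exact pow_ne_zero _ x_ne
  exact this h

lemma not_dvd_C5_c32 : ¬ (X - C c32 ∣ C5) := by
  rw [dvd_iff_isRoot, IsRoot, eval_C5_c32]
  intro h
  have : (1492992000 : A) * x ^ 6 ≠ 0 := by
    apply mul_ne_zero
    · norm_num
    · exact pow_ne_zero _ x_ne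
  exact this h

def I : Ideal R := Ideal.span {q}

lemma I_prime : I.IsPrime := (Ideal.span_singleton_prime q_ne).2 prime_q

lemma eisenstein : P.IsEisensteinAt I := by
  constructor
  · -- leading coeff not in I
    rw [Polynomial.leadingCoeff, natDegree_P, coeff_P_five,
      I, Ideal.mem_span_singleton]
    exact not_dvd_C5_c32
  · -- lower coeffs in I
    intro n hn
    rw [natDegree_P] at hn
    interval_cases n
    · rw [coeff_P_zero, I, Ideal.mem_span_singleton]
      exact ⟨(X - C c2) ^ 5, by rw [C0, q]; ring⟩
    all_goals simp [P, coeff_C, I]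
  · -- coeff 0 not in I^2
    rw [coeff_P_zero, I, Ideal.span_singleton_pow, Ideal.mem_span_singleton]
    intro hdvd
    have h1 : q ∣ (X - C c2) ^ 5 :=
      (mul_dvd_mul_iff_right q_ne).1 (by rwa [C0, sq] at hdvd)
    have h2 : q ∣ X - C c2 := prime_q.dvd_of_dvd_pow h1
    have h3 : (X - C c2).IsRoot c32 := dvd_iff_isRoot.1 h2
    simp [IsRoot, c2, c32] at h3
    have : (30 : A) * x ^ 2 ≠ 0 := mul_ne_zero (by norm_num) (pow_ne_zero _ x_ne)
    apply this
    linear_combination h3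

lemma primitive : P.IsPrimitive := by
  intro r hr
  rw [Polynomial.C_dvd_iff_dvd_coeff] at hr
  have hr5 : r ∣ C5 := by have := hr 5; rwa [coeff_P_five] at this
  have hr0 : r ∣ C0 := by have := hr 0; rwa [coeff_P_zero] at this
  by_contra hu
  have hrne : r ≠ 0 := by rintro rfl; exact C5_ne (zero_dvd_iff.1 hr5)
  obtain ⟨p, hpirr, hpr⟩ := WfDvdMonoid.exists_irreducible_factor hu hrne
  have hpprime : Prime p := UniqueFactorizationMonoid.irreducible_iff_prime.1 hpirr
  have hpC0 : p ∣ C0 := hpr.trans hr0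
  have hpC5 : p ∣ C5 := hpr.trans hr5
  rcases hpprime.dvd_or_dvd hpC0 with h | h
  · have h2 : p ∣ X - C c2 := hpprime.dvd_of_dvd_pow h
    have := (hpprime.associated_of_dvd (prime_X_sub_C c2) h2).symm.dvd.trans hpC5
    exact not_dvd_C5_c2 this
  · have := (hpprime.associated_of_dvd (prime_X_sub_C c32) h).symm.dvd.trans hpC5
    exact not_dvd_C5_c32 this

lemma irreducible_P : Irreducible P :=
  eisenstein.irreducible I_prime primitive (by rw [natDegree_P]; norm_num)

def sigma : Fin 3 ≃ Fin 3 := ⟨![2, 0, 1], ![1, 2, 0], by decide, by decide⟩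

def e : MvPolynomial (Fin 3) ℂ ≃ₐ[ℂ] Polynomial R :=
  ((MvPolynomial.renameEquiv ℂ sigma).trans (MvPolynomial.finSuccEquiv ℂ 2)).trans
    (Polynomial.mapAlgEquiv (MvPolynomial.finSuccEquiv ℂ 1))

lemma e_X0 : e (MvPolynomial.X 0) = C (C x) := by
  simp only [e, AlgEquiv.trans_apply, MvPolynomial.renameEquiv_apply, MvPolynomial.rename_X]
  rw [show sigma 0 = Fin.succ 1 by decide, MvPolynomial.finSuccEquiv_X_succ]
  rw [show (1 : Fin 2) = Fin.succ 0 by decide]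
  simp only [Polynomial.coe_mapAlgEquiv, Polynomial.map_C, x]
  congr 1
  exact MvPolynomial.finSuccEquiv_X_succ

lemma e_X1 : e (MvPolynomial.X 1) = X := by
  simp only [e, AlgEquiv.trans_apply, MvPolynomial.renameEquiv_apply, MvPolynomial.rename_X]
  rw [show sigma 1 = 0 by decide, MvPolynomial.finSuccEquiv_X_zero]
  simp

lemma e_X2 : e (MvPolynomial.X 2) = C X := by
  simp only [e, AlgEquiv.trans_apply, MvPolynomial.renameEquiv_apply, MvPolynomial.rename_X]
  rw [show sigma 2 = Fin.succ 0 by decide, MvPolynomial.finSuccEquiv_X_succ]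
  simp [MvPolynomial.finSuccEquiv_X_zero]

end SAux

end StauduharAux

open MvPolynomial in
theorem stauduhar_resolvent_specialisation_absolutely_irreducible :
    Irreducible ((X 2) ^ 6 - 42 * (X 0) ^ 2 * (X 2) ^ 5
      + 360 * (X 0) ^ 4 * (X 2) ^ 4
      - (1360 * (X 0) ^ 6 - 46656 * (X 1) ^ 5) * (X 2) ^ 3
      + (2640 * (X 0) ^ 8 - 34992 * (X 0) ^ 2 * (X 1) ^ 5) * (X 2) ^ 2
      - 2592 * (X 0) ^ 10 * (X 2) + 1024 * (X 0) ^ 12 :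
      MvPolynomial (Fin 3) ℂ) := by
  have key : SAux.e ((X 2) ^ 6 - 42 * (X 0) ^ 2 * (X 2) ^ 5
      + 360 * (X 0) ^ 4 * (X 2) ^ 4
      - (1360 * (X 0) ^ 6 - 46656 * (X 1) ^ 5) * (X 2) ^ 3
      + (2640 * (X 0) ^ 8 - 34992 * (X 0) ^ 2 * (X 1) ^ 5) * (X 2) ^ 2
      - 2592 * (X 0) ^ 10 * (X 2) + 1024 * (X 0) ^ 12 :
      MvPolynomial (Fin 3) ℂ) = SAux.P := by
    rw [SAux.P, SAux.C5, SAux.C0, SAux.c2, SAux.c32, SAux.x]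
    simp only [map_add, map_sub, map_mul, map_pow, map_ofNat,
      SAux.e_X0, SAux.e_X1, SAux.e_X2]
    simp only [SAux.x]
    ring
  have h := SAux.irreducible_P
  rw [← key] at h
  exact (MulEquiv.irreducible_iff SAux.e.toRingEquiv.toMulEquiv).1 h
end

section
/- Suppose for a coprime pair P, Q ∈ ℂ[X] (Q ≠ 0, P and Q coprime, L ≥ 1) that P₂/Q₂ ∈ ℂ(X) is a rational function in lowest terms with deg Q₂ = s > 0 and that Q₂(P(X)/Q(X))·Q(X)^{L₂} divides Q(X)^L in ℂ[X], where L₂ = max(deg P₂, deg Q₂) and deg P > deg Q ≥ 0 with deg P ≥ 2. Then a contradiction arises; i.e. necessarily s = 0, so Q₂ is constant. -/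
open Polynomial

theorem denominator_of_composite_is_constant
    (P Q P₂ Q₂ : Polynomial ℂ) (L : ℕ)
    (hPQ : IsCoprime P Q) (hQ : Q ≠ 0) (hL : 1 ≤ L)
    (hdeg : Q.natDegree < P.natDegree) (hP2 : 2 ≤ P.natDegree)
    (hcop2 : IsCoprime P₂ Q₂) (hs : 0 < Q₂.natDegree)
    (hdvd : Q ^ (max P₂.natDegree Q₂.natDegree - Q₂.natDegree) *
        (∑ i ∈ Finset.range (Q₂.natDegree + 1),
          Polynomial.C (Q₂.coeff i) * P ^ i * Q ^ (Q₂.natDegree - i)) ∣ Q ^ L) :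
    False := by
  set s := Q₂.natDegree with hsdef
  set F : Polynomial ℂ := ∑ i ∈ Finset.range (s + 1),
      Polynomial.C (Q₂.coeff i) * P ^ i * Q ^ (s - i) with hF
  have hQ₂ne : Q₂ ≠ 0 := Polynomial.ne_zero_of_natDegree_gt hs
  have hcs : Q₂.coeff s ≠ 0 := Polynomial.leadingCoeff_ne_zero.mpr hQ₂ne
  have hPne : P ≠ 0 := fun h => by simp [h] at hdeg
  -- degree of the top term
  have htop : (Polynomial.C (Q₂.coeff s) * P ^ s * Q ^ (s - s)).degree
      = (s * P.natDegree : ℕ) := by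
    simp only [Nat.sub_self, pow_zero, mul_one]
    rw [Polynomial.degree_C_mul hcs, Polynomial.degree_pow,
      Polynomial.degree_eq_natDegree hPne]
    simp [mul_comm]
  -- degree of the tail
  have htail : (∑ i ∈ Finset.range s,
      Polynomial.C (Q₂.coeff i) * P ^ i * Q ^ (s - i)).degree
      < (s * P.natDegree : ℕ) := by
    refine (Polynomial.degree_sum_le _ _).trans_lt ?_
    refine (Finset.sup_lt_iff (by exact_mod_cast WithBot.bot_lt_coe _)).2
      fun i hi => ?_
    have hi' : i < s := Finset.mem_range.mp hi
    calc (Polynomial.C (Q₂.coeff i) * P ^ i * Q ^ (s - i)).degree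
        ≤ (Polynomial.C (Q₂.coeff i)).degree + (P ^ i).degree + (Q ^ (s - i)).degree := by
          refine (Polynomial.degree_mul_le _ _).trans ?_
          exact add_le_add (Polynomial.degree_mul_le _ _) le_rfl
      _ ≤ 0 + (i * P.natDegree : ℕ) + ((s - i) * Q.natDegree : ℕ) := by
          gcongr
          · exact Polynomial.degree_C_le
          · rw [Polynomial.degree_pow]
            calc i • P.degree ≤ i • (P.natDegree : WithBot ℕ) :=
                nsmul_le_nsmul_right Polynomial.degree_le_natDegree i
              _ = (i * P.natDegree : ℕ) := by
                  simp [nsmul_eq_mul]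
          · rw [Polynomial.degree_pow]
            calc (s - i) • Q.degree ≤ (s - i) • (Q.natDegree : WithBot ℕ) :=
                nsmul_le_nsmul_right Polynomial.degree_le_natDegree _
              _ = ((s - i) * Q.natDegree : ℕ) := by
                  simp [nsmul_eq_mul]
      _ < (s * P.natDegree : ℕ) := by
          rw [zero_add]
          have : i * P.natDegree + (s - i) * Q.natDegree < s * P.natDegree := by
            have h1 : (s - i) * Q.natDegree < (s - i) * P.natDegree :=
              (Nat.mul_lt_mul_left (show 0 < s - i by omega)).mpr hdeg
            have h2 : i * P.natDegree + (s - i) * P.natDegree = s * P.natDegree := by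
              rw [← Nat.add_mul, Nat.add_sub_cancel' hi'.le]
            omega
          exact_mod_cast WithBot.coe_lt_coe.mpr this
  have hFdeg : F.degree = (s * P.natDegree : ℕ) := by
    rw [hF, Finset.sum_range_succ, Polynomial.degree_add_eq_right_of_degree_lt
      (by rw [htop]; exact htail), htop]
  have hFdegpos : 0 < F.degree := by
    rw [hFdeg]
    exact_mod_cast Nat.pos_of_ne_zero (by positivity)
  obtain ⟨x, hx⟩ := Complex.exists_root hFdegpos
  -- F divides Q ^ L
  have hFdvd : F ∣ Q ^ L := dvd_trans (dvd_mul_left F _) hdvd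
  have hQx : Q.eval x = 0 := by
    have h1 : (Q ^ L).eval x = 0 := by
      obtain ⟨c, hc⟩ := hFdvd
      rw [hc, Polynomial.eval_mul, hx.eq_zero, zero_mul]
    rw [Polynomial.eval_pow] at h1
    exact pow_eq_zero_iff (by omega) |>.mp h1
  -- evaluate F at x
  have hPx : P.eval x = 0 := by
    have hFx : F.eval x = Q₂.coeff s * P.eval x ^ s := by
      rw [hF, Polynomial.eval_finset_sum, Finset.sum_range_succ]
      have : ∀ i ∈ Finset.range s,
          (Polynomial.C (Q₂.coeff i) * P ^ i * Q ^ (s - i)).eval x = 0 := by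
        intro i hi
        have hi' : i < s := Finset.mem_range.mp hi
        simp [hQx, zero_pow (by omega : s - i ≠ 0)]
      rw [Finset.sum_eq_zero this, zero_add]
      simp
    rw [hx.eq_zero] at hFx
    have := (mul_eq_zero.mp hFx.symm).resolve_left hcs
    exact pow_eq_zero_iff (by omega : s ≠ 0) |>.mp this
  -- contradiction with coprimality
  have h2 : IsCoprime (P.eval x) (Q.eval x) := hPQ.map (Polynomial.evalRingHom x)
  rw [hPx, hQx] at h2
  exact not_isUnit_zero (isCoprime_zero_left.mp h2)
end
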